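/- arXiv:1104.4279 — 2 statements merged into one kernel-verified Lean document; each statement's English description precedes it below -/
import Mathlib

section
/- Let G = (V_1,…,V_k, E) be a balanced k-partite graph with V_i = {v^i_1,…,v^i_n}, and let F be the CNF formula consisting of (a) for every non-adjacent pair u ∈ V_i, v ∈ V_j with i ≠ j, the clause {¬u, ¬v} ∪ ((V_i ∪ V_j) \ {u,v}) (all positive), and (b) for each i the selection formula F^{=1}(v^i_1,…,v^i_n; z^i_1,…,z^i_{n−1}) enforcing that exactly one variable of V_i is true. Then G has a partitioned clique (a clique containing exactly one vertex from each V_i) if and only if F is satisfiable. -/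
open Finset

def negLit {V : Type} (l : V × Bool) : V × Bool := (l.1, !l.2)

abbrev Clause (V : Type) := Finset (V × Bool)
abbrev CNF (V : Type) := Finset (Finset (V × Bool))

variable {V : Type} [DecidableEq V]

def clauseVars (C : Clause V) : Finset V := C.image Prod.fst

def fvars (F : CNF V) : Finset V := F.sup clauseVars

def varOccurs (x : V) (C : Clause V) : Prop := (x, true) ∈ C ∨ (x, false) ∈ C

def NonTaut (C : Clause V) : Prop := ∀ l ∈ C, negLit l ∉ C

def satClause (τ : V → Bool) (C : Clause V) : Prop := ∃ l ∈ C, τ l.1 = l.2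

def satCNF (τ : V → Bool) (F : CNF V) : Prop := ∀ C ∈ F, satClause τ C

def Satisfiable (F : CNF V) : Prop := ∃ τ, satCNF τ F

/-- `R` is the `x`-resolvent of `C` and `D` (with `x` occurring positively in `C`). -/
def IsResolventOn (x : V) (C D R : Clause V) : Prop :=
  C ∩ D.image negLit = {(x, true)} ∧
    R = (C ∪ D) \ ({(x, true), (x, false)} : Clause V)

/-- Davis-Putnam elimination of variable `x`: add all `x`-resolvents and remove
all clauses in which `x` occurs. -/
def DP (x : V) (F : CNF V) : CNF V :=
  (((F ×ˢ F).filter fun p => p.1 ∩ p.2.image negLit = {(x, true)}).image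
      fun p => (p.1 ∪ p.2) \ ({(x, true), (x, false)} : Clause V)) ∪
    F.filter fun C => (x, true) ∉ C ∧ (x, false) ∉ C

def DPSeq : List V → CNF V → CNF V
  | [], F => F
  | x :: xs, F => DPSeq xs (DP x F)

def DPSimplicial (x : V) (F : CNF V) : Prop :=
  ∀ C ∈ F, ∀ D ∈ F, ∀ R : Clause V, IsResolventOn x C D R → R ⊆ C ∨ R ⊆ D

def WeaklySimplicialVar (x : V) (F : CNF V) : Prop :=
  ∀ C ∈ F, ∀ D ∈ F, varOccurs x C → varOccurs x D →
    clauseVars C ⊆ clauseVars D ∨ clauseVars D ⊆ clauseVars C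

def IsDPSElim : List V → CNF V → Prop
  | [], _ => True
  | x :: xs, F => DPSimplicial x F ∧ IsDPSElim xs (DP x F)

def IsWSElim : List V → CNF V → Prop
  | [], _ => True
  | x :: xs, F => WeaklySimplicialVar x F ∧ IsWSElim xs (DP x F)

def HasDPSElimOrdering (F : CNF V) : Prop :=
  ∃ l : List V, l.toFinset = fvars F ∧ IsDPSElim l F

def HasWSElimOrdering (F : CNF V) : Prop :=
  ∃ l : List V, l.toFinset = fvars F ∧ IsWSElim l F

/-- `F − B`: remove all literals over variables in `B` from all clauses. -/
def minusVars (F : CNF V) (B : Finset V) : CNF V :=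
  F.image fun C => C.filter fun l => l.1 ∉ B

/-- `F[τ]` for the partial assignment given by restricting `τ` to `B`:
remove satisfied clauses and delete falsified literals. -/
def reduct (F : CNF V) (B : Finset V) (τ : V → Bool) : CNF V :=
  (F.filter fun C => ∀ l ∈ C, l.1 ∈ B → τ l.1 ≠ l.2).image
    fun C => C.filter fun l => l.1 ∉ B


/-- The gadget formula `F(z,a,b)` enforcing `z = a + b` with at most one of `a,b` true. -/
def Fgadget {V : Type} [DecidableEq V] (z a b : V) : CNF V :=
  { {(z, true), (a, true), (b, false)},
    {(z, true), (a, false), (b, true)},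
    {(z, true), (a, false), (b, false)},
    {(z, false), (a, true), (b, true)},
    {(z, false), (a, false), (b, false)} }

/-- The selection formula `F^{=1}(x_1,…,x_m; z_1,…,z_{m−1})`. -/
def Fone {V : Type} [DecidableEq V] (m : ℕ) (x z : ℕ → V) : CNF V :=
  Fgadget (z 1) (x 1) (x 2) ∪
    (Finset.Icc 2 (m - 1)).biUnion (fun i => Fgadget (z i) (z (i - 1)) (x (i + 1))) ∪
    {({(z (m - 1), true)} : Clause V)}

/-- The CNF formula of the reduction from Partitioned Clique: variables are the
vertices of `G` (as `Sum.inl`) plus selector variables `z^i_t` (as `Sum.inr (i, t)`).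
Part (a): for every non-adjacent pair `u ∈ V_i`, `v ∈ V_j` (`i ≠ j`) the clause
`{¬u, ¬v} ∪ ((V_i ∪ V_j) \ {u,v})`; part (b): for each `i` the selection formula
`F^{=1}` over class `V_i` with selector variables `z^i_1, …, z^i_{n−1}`. -/
def F14 {k n : ℕ} (hn : 0 < n) (G : SimpleGraph (Fin k × Fin n))
    [DecidableRel G.Adj] : CNF ((Fin k × Fin n) ⊕ (Fin k × Fin n)) :=
  ((Finset.univ.filter fun pq : (Fin k × Fin n) × (Fin k × Fin n) =>
      pq.1.1 ≠ pq.2.1 ∧ ¬ G.Adj pq.1 pq.2).image fun pq =>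
        insert (Sum.inl pq.1, false) (insert (Sum.inl pq.2, false)
          ((Finset.univ.filter fun w : Fin k × Fin n =>
              (w.1 = pq.1.1 ∨ w.1 = pq.2.1) ∧ w ≠ pq.1 ∧ w ≠ pq.2).image
            fun w => ((Sum.inl w : (Fin k × Fin n) ⊕ (Fin k × Fin n)), true)))) ∪
    Finset.univ.biUnion fun i : Fin k =>
      Fone n (fun t => Sum.inl (i, ⟨(t - 1) % n, Nat.mod_lt _ hn⟩))
             (fun t => Sum.inr (i, ⟨(t - 1) % n, Nat.mod_lt _ hn⟩))


section Helpers

lemma satCNF_union (τ : V → Bool) (A B : CNF V) :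
    satCNF τ (A ∪ B) ↔ satCNF τ A ∧ satCNF τ B := by
  simp [satCNF, Finset.mem_union, or_imp, forall_and]

lemma satCNF_biUnion {ι : Type*} [DecidableEq ι] (τ : V → Bool) (s : Finset ι) (f : ι → CNF V) :
    satCNF τ (s.biUnion f) ↔ ∀ i ∈ s, satCNF τ (f i) := by
  simp [satCNF, Finset.mem_biUnion]
  tauto

lemma satCNF_singleton (τ : V → Bool) (C : Clause V) :
    satCNF τ ({C} : CNF V) ↔ satClause τ C := by
  simp [satCNF]

lemma satClause_singleton (τ : V → Bool) (l : V × Bool) :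
    satClause τ ({l} : Clause V) ↔ τ l.1 = l.2 := by
  simp [satClause]

lemma satGadget (τ : V → Bool) (z a b : V) :
    satCNF τ (Fgadget z a b) ↔
      (τ z = (τ a || τ b) ∧ ¬(τ a = true ∧ τ b = true)) := by
  cases hz : τ z <;> cases ha : τ a <;> cases hb : τ b <;>
    simp [satCNF, satClause, Fgadget, hz, ha, hb] <;> aesop

lemma fone_sem_rev (n : ℕ) (hn : 2 ≤ n) (f g : ℕ → Bool)
    (h1 : g 1 = (f 1 || f 2) ∧ ¬(f 1 = true ∧ f 2 = true))
    (h2 : ∀ i, 2 ≤ i → i ≤ n - 1 →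
      g i = (g (i-1) || f (i+1)) ∧ ¬(g (i-1) = true ∧ f (i+1) = true))
    (h3 : g (n-1) = true) :
    ∃! t, 1 ≤ t ∧ t ≤ n ∧ f t = true := by
  have key : ∀ i, 1 ≤ i → i ≤ n - 1 →
      (g i = true → ∃! t, 1 ≤ t ∧ t ≤ i + 1 ∧ f t = true) ∧
      (g i = false → ∀ t, 1 ≤ t → t ≤ i + 1 → f t = false) := by
    intro i
    induction i with
    | zero => omega
    | succ i ih =>
      intro _ hle
      rcases Nat.lt_or_ge i 1 with hi | hi
      · interval_cases i
        clear ih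
        obtain ⟨he, hb⟩ := h1
        constructor
        · intro hg1
          rw [hg1] at he
          cases hf1 : f 1 with
          | true =>
            have hf2 : f 2 = false := by
              cases h : f 2
              · rfl
              · exact absurd ⟨hf1, h⟩ hb
            refine ⟨1, ⟨le_refl 1, by omega, hf1⟩, ?_⟩
            rintro t ⟨a, b, c⟩
            interval_cases t
            · rfl
            · rw [hf2] at c; cases c
          | false =>
            have hf2 : f 2 = true := by
              rw [hf1] at he; simpa using he.symm
            refine ⟨2, ⟨by omega, le_refl 2, hf2⟩, ?_⟩
            rintro t ⟨a, b, c⟩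
            interval_cases t
            · rw [hf1] at c; cases c
            · rfl
        · intro hg1
          rw [hg1] at he
          have hf1 : f 1 = false := by cases h : f 1 <;> simp [h] at he ⊢
          have hf2 : f 2 = false := by cases h : f 2 <;> simp [h] at he ⊢
          intro t h1t h2t
          interval_cases t
          · exact hf1
          · exact hf2
      · have hee := h2 (i+1) (by omega) hle
        simp only [Nat.add_sub_cancel] at hee
        obtain ⟨he, hb⟩ := hee
        have ihs := ih (by omega) (by omega)
        clear ih
        constructor
        · intro hg
          rw [hg] at he
          cases hgi : g i with
          | false =>
            have hfi : f (i+2) = true := by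
              rw [hgi] at he; simpa using he.symm
            refine ⟨i+2, ⟨by omega, by omega, hfi⟩, ?_⟩
            rintro t ⟨a, b, c⟩
            rcases Nat.lt_or_ge t (i+2) with h | h
            · exact absurd c (by simp [ihs.2 hgi t a (by omega)])
            · omega
          | true =>
            have hfi : f (i+2) = false := by
              cases h : f (i+2)
              · rfl
              · exact absurd ⟨hgi, h⟩ hb
            obtain ⟨t0, ht0, hu⟩ := ihs.1 hgi
            refine ⟨t0, ⟨ht0.1, by omega, ht0.2.2⟩, ?_⟩
            rintro t ⟨a, b, c⟩
            rcases Nat.lt_or_ge t (i+2) with h | h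
            · exact hu t ⟨a, by omega, c⟩
            · rw [show t = i + 2 by omega, hfi] at c; cases c
        · intro hg
          rw [hg] at he
          have hgi : g i = false := by cases h : g i <;> simp [h] at he ⊢
          have hfi : f (i+2) = false := by cases h : f (i+2) <;> simp [h] at he ⊢
          intro t h1t h2t
          rcases Nat.lt_or_ge t (i+2) with h | h
          · exact ihs.2 hgi t h1t (by omega)
          · rw [show t = i + 2 by omega]; exact hfi
  have hmain := (key (n-1) (by omega) (by omega)).1 h3
  rwa [show n - 1 + 1 = n by omega] at hmain

end Helpers

/-- a balanced `k`-partite graph `G` (classes `V_i = {i} × Fin n`)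
has a partitioned clique iff the formula `F14 G` is satisfiable. -/
theorem partitionedClique_iff_sat (k n : ℕ) (hn : 2 ≤ n)
    (G : SimpleGraph (Fin k × Fin n)) [DecidableRel G.Adj]
    (hpart : ∀ (i : Fin k) (a b : Fin n), ¬ G.Adj (i, a) (i, b)) :
    (∃ K : Fin k → Fin n, ∀ i j : Fin k, i ≠ j → G.Adj (i, K i) (j, K j)) ↔
      Satisfiable (F14 (by omega) G) := by
  have hn' : 0 < n := by omega
  constructor
  · rintro ⟨K, hK⟩
    refine ⟨Sum.elim (fun p => decide (p.2 = K p.1))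
      (fun p => decide ((K p.1 : ℕ) ≤ (p.2 : ℕ) + 1)), ?_⟩
    unfold F14
    refine (satCNF_union _ _ _).mpr ⟨?_, ?_⟩
    · intro C hC
      simp only [Finset.mem_image, Finset.mem_filter, Finset.mem_univ, true_and] at hC
      obtain ⟨pq, ⟨hne, hnadj⟩, rfl⟩ := hC
      have hone : pq.1.2 ≠ K pq.1.1 ∨ pq.2.2 ≠ K pq.2.1 := by
        by_contra hcon
        push_neg at hcon
        have hadj := hK pq.1.1 pq.2.1 hne
        rw [← hcon.1, ← hcon.2] at hadj
        exact hnadj (by simpa using hadj)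
      rcases hone with h | h
      · exact ⟨(Sum.inl pq.1, false), by simp, by simp [h]⟩
      · exact ⟨(Sum.inl pq.2, false), by simp, by simp [h]⟩
    · rw [satCNF_biUnion]
      intro i _
      unfold Fone
      have hc := (K i).isLt
      refine (satCNF_union _ _ _).mpr ⟨(satCNF_union _ _ _).mpr ⟨?_, ?_⟩, ?_⟩
      · rw [satGadget]
        have e0 : (1 - 1) % n = 0 := by simp
        have e1 : (2 - 1) % n = 1 := Nat.mod_eq_of_lt (by omega)
        constructor
        · simp only [Sum.elim_inl, Sum.elim_inr, ← Bool.decide_or, decide_eq_decide,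
            Fin.ext_iff, e0, e1]
          omega
        · simp only [Sum.elim_inl, decide_eq_true_eq, Fin.ext_iff, e0, e1, not_and]
          omega
      · rw [satCNF_biUnion]
        intro j hj
        rw [Finset.mem_Icc] at hj
        rw [satGadget]
        have e1 : (j - 1) % n = j - 1 := Nat.mod_eq_of_lt (by omega)
        have e2 : (j - 1 - 1) % n = j - 1 - 1 := Nat.mod_eq_of_lt (by omega)
        have e3 : (j + 1 - 1) % n = j := by
          rw [Nat.add_sub_cancel]; exact Nat.mod_eq_of_lt (by omega)
        constructor
        · simp only [Sum.elim_inl, Sum.elim_inr, ← Bool.decide_or, decide_eq_decide,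
            Fin.ext_iff, e1, e2, e3]
          omega
        · simp only [Sum.elim_inl, Sum.elim_inr, decide_eq_true_eq, Fin.ext_iff,
            e1, e2, e3, not_and]
          omega
      · rw [satCNF_singleton, satClause_singleton]
        have e : (n - 1 - 1) % n = n - 1 - 1 := Nat.mod_eq_of_lt (by omega)
        simp only [Sum.elim_inr, decide_eq_true_eq, e]
        omega
  · rintro ⟨τ, hτ⟩
    unfold F14 at hτ
    rw [satCNF_union, satCNF_biUnion] at hτ
    obtain ⟨hA, hB⟩ := hτ
    have hfa : ∀ i (a : Fin n),
        τ (Sum.inl (i, ⟨((a : ℕ) + 1 - 1) % n, Nat.mod_lt _ hn'⟩)) = τ (Sum.inl (i, a)) := by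
      intro i a
      have hfin : (⟨((a : ℕ) + 1 - 1) % n, Nat.mod_lt _ hn'⟩ : Fin n) = a :=
        Fin.ext (by simp [Nat.mod_eq_of_lt a.isLt])
      rw [hfin]
    have huniq : ∀ i : Fin k, ∃! a : Fin n, τ (Sum.inl (i, a)) = true := by
      intro i
      have hi := hB i (Finset.mem_univ i)
      unfold Fone at hi
      rw [satCNF_union, satCNF_union, satCNF_biUnion, satCNF_singleton,
        satClause_singleton, satGadget] at hi
      obtain ⟨⟨hg1, hgs⟩, hz⟩ := hi
      simp only [satGadget] at hgs
      obtain ⟨t0, ⟨ht1, ht2, ht3⟩, hu⟩ :=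
        fone_sem_rev n hn
          (fun t => τ (Sum.inl (i, ⟨(t - 1) % n, Nat.mod_lt _ hn'⟩)))
          (fun t => τ (Sum.inr (i, ⟨(t - 1) % n, Nat.mod_lt _ hn'⟩)))
          hg1 (fun j hj1 hj2 => hgs j (Finset.mem_Icc.mpr ⟨hj1, hj2⟩)) hz
      refine ⟨⟨t0 - 1, by omega⟩, ?_, ?_⟩
      · have hfin : (⟨(t0 - 1) % n, Nat.mod_lt _ hn'⟩ : Fin n) = ⟨t0 - 1, by omega⟩ :=
          Fin.ext (Nat.mod_eq_of_lt (by omega))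
        rw [← hfin]
        exact ht3
      · intro a ha
        have hlt := a.isLt
        have heq := hu ((a : ℕ) + 1) ⟨by omega, by omega, by rw [hfa i a]; exact ha⟩
        exact Fin.ext (by show (a : ℕ) = t0 - 1; omega)
    choose K hK using huniq
    refine ⟨K, ?_⟩
    intro i j hij
    by_contra hadj
    have hCl := hA _ (Finset.mem_image_of_mem _
      (Finset.mem_filter.mpr ⟨Finset.mem_univ (((i, K i), (j, K j)) : (Fin k × Fin n) × (Fin k × Fin n)), hij, hadj⟩))
    obtain ⟨l, hl, hv⟩ := hCl
    simp only [Finset.mem_insert, Finset.mem_image, Finset.mem_filter, Finset.mem_univ,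
      true_and] at hl
    rcases hl with rfl | rfl | ⟨w, ⟨hw1, hw2, hw3⟩, rfl⟩
    · simp [(hK i).1] at hv
    · simp [(hK j).1] at hv
    · simp only at hv hw2 hw3
      rcases hw1 with h | h
      · have hvv : τ (Sum.inl (i, w.2)) = true := by rw [← h]; simpa using hv
        have hw : w.2 = K i := (hK i).2 w.2 hvv
        apply hw2
        rw [← hw, ← h]
      · have hvv : τ (Sum.inl (j, w.2)) = true := by rw [← h]; simpa using hv
        have hw : w.2 = K j := (hK j).2 w.2 hvv
        apply hw3
        rw [← hw, ← h]
end

section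
/- The formula F with variables y, z, b, b', b*, c and clauses {y,b,b*,c}, {y,¬b}, {y,¬b,b',z}, {¬y,b,b',¬c}, {¬y,¬b}, {¬y,¬b,b*,¬z}, {¬b,b'}, {¬b,z}, {¬b,¬z}, {b',b*,c}, {b',b*,¬c}, {b',¬b*}, {¬b',b*} has no weakly simplicial variable, but the ordering y, b, b', b*, c, z is a DP-simplicial elimination ordering of F; hence the class of formulas admitting a DP-simplicial elimination ordering properly contains the class of formulas admitting a weakly simplicial elimination ordering. -/
open Finset

variable {V : Type} [DecidableEq V]

/-- The example formula with variables `y = 0`, `z = 1`, `b = 2`, `b' = 3`, `b* = 4`,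
`c = 5` and clauses `{y,b,b*,c}`, `{y,¬b}`, `{y,¬b,b',z}`, `{¬y,b,b',¬c}`, `{¬y,¬b}`,
`{¬y,¬b,b*,¬z}`, `{¬b,b'}`, `{¬b,z}`, `{¬b,¬z}`, `{b',b*,c}`, `{b',b*,¬c}`,
`{b',¬b*}`, `{¬b',b*}`. -/
def F19 : CNF ℕ :=
  { {(0, true), (2, true), (4, true), (5, true)},
    {(0, true), (2, false)},
    {(0, true), (2, false), (3, true), (1, true)},
    {(0, false), (2, true), (3, true), (5, false)},
    {(0, false), (2, false)},
    {(0, false), (2, false), (4, true), (1, false)},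
    {(2, false), (3, true)},
    {(2, false), (1, true)},
    {(2, false), (1, false)},
    {(3, true), (4, true), (5, true)},
    {(3, true), (4, true), (5, false)},
    {(3, true), (4, false)},
    {(3, false), (4, true)} }

instance {V : Type} [DecidableEq V] (x : V) (C : Clause V) :
    Decidable (varOccurs x C) := by unfold varOccurs; infer_instance

instance {V : Type} [DecidableEq V] (x : V) (F : CNF V) :
    Decidable (WeaklySimplicialVar x F) := by unfold WeaklySimplicialVar; infer_instance

lemma negLit_negLit {V : Type} (l : V × Bool) : negLit (negLit l) = l := by
  cases l; simp [negLit]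

lemma ws_imp_dps {V : Type} [DecidableEq V] (x : V) (F : CNF V)
    (h : WeaklySimplicialVar x F) : DPSimplicial x F := by
  intro C hC D hD R hR
  obtain ⟨hint, hRdef⟩ := hR
  have hmemi : (x, true) ∈ C ∩ D.image negLit := by rw [hint]; simp
  have hxC : (x, true) ∈ C := (Finset.mem_inter.mp hmemi).1
  have hxD : (x, false) ∈ D := by
    obtain ⟨l, hl, hnl⟩ := Finset.mem_image.mp (Finset.mem_inter.mp hmemi).2
    obtain ⟨v, b⟩ := l
    simp [negLit] at hnl
    obtain ⟨h1, h2⟩ := hnl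
    subst h1
    have : b = false := by cases b <;> simp_all
    rwa [this] at hl
  have key : ∀ C' D' : Clause V,
      C' ∩ D'.image negLit ⊆ ({(x, true), (x, false)} : Clause V) →
      clauseVars C' ⊆ clauseVars D' →
      ((C' ∪ D') \ ({(x, true), (x, false)} : Clause V)) ⊆ D' := by
    intro C' D' hint' hsub l hl
    simp only [Finset.mem_sdiff, Finset.mem_union, Finset.mem_insert,
      Finset.mem_singleton] at hl
    obtain ⟨hmem, hne⟩ := hl
    push_neg at hne
    rcases hmem with hlC | hlD
    · have hv : l.1 ∈ clauseVars D' := hsub (Finset.mem_image_of_mem _ hlC)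
      obtain ⟨m, hm, hm1⟩ := Finset.mem_image.mp hv
      by_cases heq : m = l
      · exact heq ▸ hm
      · exfalso
        have hneg : negLit l ∈ D' := by
          obtain ⟨v, b⟩ := l; obtain ⟨w, c⟩ := m
          simp at hm1; subst hm1
          have : c = !b := by
            cases b <;> cases c <;> simp_all
          rw [this] at hm; exact hm
        have hmem2 : l ∈ C' ∩ D'.image negLit :=
          Finset.mem_inter.mpr ⟨hlC, Finset.mem_image.mpr
            ⟨negLit l, hneg, negLit_negLit l⟩⟩
        have := hint' hmem2
        simp only [Finset.mem_insert, Finset.mem_singleton] at this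
        rcases this with h' | h'
        · exact hne.1 h'
        · exact hne.2 h'
    · exact hlD
  rcases h C hC D hD (Or.inl hxC) (Or.inr hxD) with hsub | hsub
  · right; rw [hRdef]
    exact key C D (by rw [hint]; intro l hl; simp at hl; simp [hl]) hsub
  · left; rw [hRdef]
    have hint2 : D ∩ C.image negLit = {(x, false)} := by
      ext l
      simp only [Finset.mem_inter, Finset.mem_image, Finset.mem_singleton]
      constructor
      · rintro ⟨hlD, m, hmC, rfl⟩
        have : m ∈ C ∩ D.image negLit :=
          Finset.mem_inter.mpr ⟨hmC, Finset.mem_image.mpr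
            ⟨negLit m, hlD, negLit_negLit m⟩⟩
        rw [hint] at this
        simp at this
        subst this
        rfl
      · rintro rfl
        exact ⟨hxD, (x, true), hxC, rfl⟩
    have hk := key D C (by rw [hint2]; intro l hl; simp at hl; simp [hl]) hsub
    intro l hl
    apply hk
    simp only [Finset.mem_sdiff, Finset.mem_union, Finset.mem_insert,
      Finset.mem_singleton] at hl ⊢
    tauto

lemma isWS_imp_isDPS {V : Type} [DecidableEq V] :
    ∀ (l : List V) (F : CNF V), IsWSElim l F → IsDPSElim l F
  | [], _, _ => trivial
  | x :: xs, F, h => ⟨ws_imp_dps x F h.1, isWS_imp_isDPS xs (DP x F) h.2⟩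

lemma dps_of_dec {V : Type} [DecidableEq V] (x : V) (F : CNF V)
    (h : ∀ C ∈ F, ∀ D ∈ F, C ∩ D.image negLit = {(x, true)} →
      ((C ∪ D) \ ({(x, true), (x, false)} : Clause V) ⊆ C ∨
        (C ∪ D) \ ({(x, true), (x, false)} : Clause V) ⊆ D)) :
    DPSimplicial x F := by
  intro C hC D hD R hR
  obtain ⟨hint, rfl⟩ := hR
  exact h C hC D hD hint

/-- the formula `F19` has no weakly simplicial variable, but the ordering
`y, b, b', b*, c, z` is a DP-simplicial elimination ordering of `F19`; hence the class
of formulas admitting a DP-simplicial elimination ordering properly contains the class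
of formulas admitting a weakly simplicial elimination ordering. -/
theorem F19_dps_not_ws :
    (∀ x ∈ fvars F19, ¬ WeaklySimplicialVar x F19) ∧
      (([0, 2, 3, 4, 5, 1] : List ℕ).toFinset = fvars F19 ∧
        IsDPSElim ([0, 2, 3, 4, 5, 1] : List ℕ) F19) ∧
      (∀ G : CNF ℕ, HasWSElimOrdering G → HasDPSElimOrdering G) ∧
      (∃ G : CNF ℕ, HasDPSElimOrdering G ∧ ¬ HasWSElimOrdering G) := by
  have h1 : ∀ x ∈ fvars F19, ¬ WeaklySimplicialVar x F19 := by decide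
  have h2 : ([0, 2, 3, 4, 5, 1] : List ℕ).toFinset = fvars F19 := by decide
  have h3 : IsDPSElim ([0, 2, 3, 4, 5, 1] : List ℕ) F19 := by
    refine ⟨dps_of_dec _ _ (by decide), dps_of_dec _ _ (by decide),
      dps_of_dec _ _ (by decide), dps_of_dec _ _ (by decide),
      dps_of_dec _ _ (by decide), dps_of_dec _ _ (by decide), trivial⟩
  refine ⟨h1, ⟨h2, h3⟩, ?_, ?_⟩
  · rintro G ⟨l, hl, hws⟩
    exact ⟨l, hl, isWS_imp_isDPS l G hws⟩
  · refine ⟨F19, ⟨_, h2, h3⟩, ?_⟩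
    rintro ⟨l, hl, hws⟩
    match l, hl, hws with
    | [], hl, _ =>
      have : (0 : ℕ) ∈ fvars F19 := by decide
      rw [← hl] at this
      simp at this
    | x :: xs, hl, hws =>
      have hx : x ∈ fvars F19 := by
        rw [← hl]; simp
      exact h1 x hx hws.1
end
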